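/- arXiv:1807.11026 — 2 statements merged into one kernel-verified Lean document; each statement's English description precedes it below -/
import Mathlib

section
/- For every rational tangle word (a_1, …, a_n): no two consecutive syllables are both SI syllables, and every maximal run of NSI syllables other than the last one consists of (a) a single even syllable, (b) two consecutive odd syllables, or (c) an odd syllable, followed by a nonempty string of even syllables, followed by a final odd syllable. -/
/-!
Seen from syllable `i`, the three states are its self-intersection state `siState i`, the
opposite state `siState (i + 1)`, and `X`; a crossing of syllable `i` fixes the first and exchanges
the other two, so an even syllable leaves the state unchanged and an odd one acts as one crossing.
After an SI syllable `i` the state is `siState i = siState (i + 2)`, the opposite state of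
syllable `i + 1`, which is therefore NSI. Hence every maximal NSI run starts in the opposite state.
An even first syllable returns it to the SI state at once: shape (a). An odd one moves it to `X`,
which even syllables preserve and the next odd syllable turns into the SI state, ending the run;
when the run is not the last one, that closing odd syllable exists, giving (b) or (c).
-/

/-- The three connectivity states of a partially built rational tangle:
`H = {NW–NE, SW–SE}`, `V = {NW–SW, NE–SE}`, `X = {NW–SE, NE–SW}`. -/
inductive TState : Type
  | H
  | V
  | X
  deriving DecidableEq

/-- Effect of a bottom crossing (a twist of SW and SE) on the connectivity state. -/
def bstep : TState → TState
  | .H => .H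
  | .V => .X
  | .X => .V

/-- Effect of a right crossing (a twist of NE and SE) on the connectivity state. -/
def rstep : TState → TState
  | .V => .V
  | .H => .X
  | .X => .H

/-- `step true` is a bottom crossing, `step false` is a right crossing. -/
def step : Bool → TState → TState
  | true => bstep
  | false => rstep

/-- The twist direction of the (0-based) `i`-th syllable: bottom iff `i` is even
(1-based odd syllables are bottom twists). -/
def sylDir (i : ℕ) : Bool := decide (i % 2 = 0)

/-- The state in which a crossing of the (0-based) `i`-th syllable is a self-intersection:
`H` for bottom syllables, `V` for right syllables. -/
def siState (i : ℕ) : TState := if i % 2 = 0 then TState.H else TState.V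

/-- Process a list of syllables starting from state `s`; the Boolean `b` records
whether the next syllable is a bottom syllable. Each syllable `a` applies
`|a|` crossings of the appropriate direction. -/
def runWord : List ℤ → Bool → TState → TState
  | [], _, s => s
  | a :: t, b, s => runWord t (!b) ((step b)^[a.natAbs] s)

/-- The connectivity state at the start of the (0-based) `i`-th syllable of the word `w`
(a rational tangle word starts in state `V`). -/
def stateAt (w : List ℤ) (i : ℕ) : TState := runWord (w.take i) true TState.V

/-- The (0-based) `i`-th syllable of `w` is an SI syllable. -/
def IsSISyl (w : List ℤ) (i : ℕ) : Prop := stateAt w i = siState i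

instance (w : List ℤ) (i : ℕ) : Decidable (IsSISyl w i) :=
  inferInstanceAs (Decidable (_ = _))

/-- `IsNSIRun w l r` : the syllables with (0-based) indices in `[l, r)` form a maximal run
of NSI syllables of `w`. -/
def IsNSIRun (w : List ℤ) (l r : ℕ) : Prop :=
  l < r ∧ r ≤ w.length ∧ (∀ j, l ≤ j → j < r → ¬ IsSISyl w j) ∧
    (l = 0 ∨ IsSISyl w (l - 1)) ∧ (r = w.length ∨ IsSISyl w r)

/-- The last maximal run of NSI syllables: a maximal run such that every later syllable
is an SI syllable. -/
def IsLastNSIRun (w : List ℤ) (l r : ℕ) : Prop :=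
  IsNSIRun w l r ∧ ∀ j, r ≤ j → j < w.length → IsSISyl w j

/-- Run shape (a): a single even syllable. -/
def RunA (w : List ℤ) (l r : ℕ) : Prop := r = l + 1 ∧ Even (w.getD l 0)

/-- Run shape (b): two consecutive odd syllables. -/
def RunB (w : List ℤ) (l r : ℕ) : Prop :=
  r = l + 2 ∧ Odd (w.getD l 0) ∧ Odd (w.getD (l + 1) 0)

/-- Run shape (c): an odd syllable, then a nonempty string of even syllables,
then a final odd syllable. -/
def RunC (w : List ℤ) (l r : ℕ) : Prop :=
  l + 3 ≤ r ∧ Odd (w.getD l 0) ∧ Odd (w.getD (r - 1) 0) ∧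
    ∀ j, l < j → j < r - 1 → Even (w.getD j 0)

/-- Run shape (a'): a single odd syllable. -/
def RunA' (w : List ℤ) (l r : ℕ) : Prop := r = l + 1 ∧ Odd (w.getD l 0)

/-- Run shape (b'): an odd syllable followed by a nonempty string of even syllables. -/
def RunB' (w : List ℤ) (l r : ℕ) : Prop :=
  l + 2 ≤ r ∧ Odd (w.getD l 0) ∧ ∀ j, l < j → j < r → Even (w.getD j 0)


lemma runWord_append (u v : List ℤ) (b : Bool) (s : TState) :
    runWord (u ++ v) b s = runWord v ((!·)^[u.length] b) (runWord u b s) := by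
  induction u generalizing b s with
  | nil => rfl
  | cons a t ih =>
    simp only [List.cons_append, runWord, ih, List.length_cons, Function.iterate_succ_apply]

lemma not_iterate_true (i : ℕ) : (!·)^[i] true = sylDir i := by
  rcases Nat.even_or_odd i with hi | hi
  · simp [Bool.involutive_not.iterate_even hi, sylDir, Nat.even_iff.mp hi]
  · simp [Bool.involutive_not.iterate_odd hi, sylDir, Nat.odd_iff.mp hi]

lemma stateAt_succ (w : List ℤ) {i : ℕ} (hi : i < w.length) :
    stateAt w (i + 1) = (step (sylDir i))^[(w.getD i 0).natAbs] (stateAt w i) := by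
  rw [stateAt, stateAt, List.take_add_one, runWord_append, List.length_take, min_eq_left hi.le,
    not_iterate_true, List.getElem?_eq_getElem hi, List.getD_eq_getElem w 0 hi]
  rfl

lemma step_involutive (b : Bool) : Function.Involutive (step b) := by
  intro s; cases b <;> cases s <;> rfl

lemma stateAt_succ_of_even (w : List ℤ) {i : ℕ} (hi : i < w.length) (he : Even (w.getD i 0)) :
    stateAt w (i + 1) = stateAt w i := by
  rw [stateAt_succ w hi, (step_involutive _).iterate_even (Int.natAbs_even.mpr he), id]

lemma stateAt_succ_of_odd (w : List ℤ) {i : ℕ} (hi : i < w.length) (ho : Odd (w.getD i 0)) :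
    stateAt w (i + 1) = step (sylDir i) (stateAt w i) := by
  rw [stateAt_succ w hi, (step_involutive _).iterate_odd (Int.natAbs_odd.mpr ho)]

lemma siState_add_two (i : ℕ) : siState (i + 2) = siState i := by
  simp only [siState, Nat.add_mod_right]

lemma siState_succ_ne (i : ℕ) : siState (i + 1) ≠ siState i := by
  rcases Nat.mod_two_eq_zero_or_one i with h | h <;>
    simp [siState, h, Nat.succ_mod_two_eq_zero_iff]

lemma siState_ne_X (i : ℕ) : siState i ≠ .X := by
  unfold siState; split <;> simp

lemma step_sylDir_siState (i : ℕ) : step (sylDir i) (siState i) = siState i := by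
  rcases Nat.mod_two_eq_zero_or_one i with h | h <;> simp [sylDir, siState, h] <;> rfl

lemma step_sylDir_siState_succ (i : ℕ) : step (sylDir i) (siState (i + 1)) = .X := by
  rcases Nat.mod_two_eq_zero_or_one i with h | h <;>
    simp [sylDir, siState, h, Nat.succ_mod_two_eq_zero_iff] <;> rfl

lemma step_sylDir_X (i : ℕ) : step (sylDir i) .X = siState (i + 1) := by
  rcases Nat.mod_two_eq_zero_or_one i with h | h <;>
    simp [sylDir, siState, h, Nat.succ_mod_two_eq_zero_iff] <;> rfl

lemma stateAt_succ_of_isSISyl (w : List ℤ) {i : ℕ} (hi : i < w.length) (h : IsSISyl w i) :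
    stateAt w (i + 1) = siState i := by
  rcases Int.even_or_odd (w.getD i 0) with he | ho
  · exact (stateAt_succ_of_even w hi he).trans h
  · rw [stateAt_succ_of_odd w hi ho, h, step_sylDir_siState]

lemma not_isSISyl_succ_of_isSISyl (w : List ℤ) {i : ℕ} (hi : i < w.length) (h : IsSISyl w i) :
    ¬ IsSISyl w (i + 1) := by
  rw [IsSISyl, stateAt_succ_of_isSISyl w hi h]
  exact (siState_succ_ne i).symm

lemma stateAt_succ_of_X (w : List ℤ) {i : ℕ} (hi : i < w.length) (h : stateAt w i = .X) :
    stateAt w (i + 1) = .X ∧ Even (w.getD i 0) ∨ IsSISyl w (i + 1) ∧ Odd (w.getD i 0) := by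
  rcases Int.even_or_odd (w.getD i 0) with he | ho
  · exact .inl ⟨(stateAt_succ_of_even w hi he).trans h, he⟩
  · exact .inr ⟨by rw [IsSISyl, stateAt_succ_of_odd w hi ho, h, step_sylDir_X], ho⟩

lemma IsNSIRun.stateAt_start {w : List ℤ} {l r : ℕ} (hrun : IsNSIRun w l r) :
    stateAt w l = siState (l + 1) := by
  obtain ⟨hlr, hrlen, -, hstart, -⟩ := hrun
  cases l with
  | zero => rfl
  | succ k =>
    have hSI : IsSISyl w k := hstart.resolve_left k.succ_ne_zero
    rw [stateAt_succ_of_isSISyl w (by omega) hSI, ← siState_add_two]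

lemma IsNSIRun.eq_succ_of_even {w : List ℤ} {l r : ℕ} (hrun : IsNSIRun w l r)
    (he : Even (w.getD l 0)) : r = l + 1 := by
  have ⟨hlr, hrlen, hNSI, _, _⟩ := hrun
  by_contra hne
  refine hNSI (l + 1) (by omega) (by omega) ?_
  rw [IsSISyl, stateAt_succ_of_even w (by omega) he, hrun.stateAt_start]

lemma IsNSIRun.stateAt_succ_eq_X {w : List ℤ} {l r : ℕ} (hrun : IsNSIRun w l r)
    (ho : Odd (w.getD l 0)) : stateAt w (l + 1) = .X := by
  rw [stateAt_succ_of_odd w (hrun.1.trans_le hrun.2.1) ho, hrun.stateAt_start,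
    step_sylDir_siState_succ]

lemma IsNSIRun.stateAt_eq_X {w : List ℤ} {l r : ℕ} (hrun : IsNSIRun w l r)
    (ho : Odd (w.getD l 0)) {j : ℕ} (hlj : l < j) (hjr : j < r) : stateAt w j = .X := by
  have ⟨_, hrlen, hNSI, _, _⟩ := hrun
  induction j, hlj using Nat.le_induction with
  | base => exact hrun.stateAt_succ_eq_X ho
  | succ j hlj ih =>
    rcases stateAt_succ_of_X w (by omega) (ih (by omega)) with ⟨hX, -⟩ | ⟨hSI, -⟩
    · exact hX
    · exact absurd hSI (hNSI (j + 1) (by omega) hjr)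

lemma IsNSIRun.runB_or_runC {w : List ℤ} {l r : ℕ} (hrun : IsNSIRun w l r)
    (hr : r < w.length) (ho : Odd (w.getD l 0)) : RunB w l r ∨ RunC w l r := by
  have ⟨hlr, hrlen, hNSI, _, hend⟩ := hrun
  have hSIr : IsSISyl w r := hend.resolve_left hr.ne
  have hlr2 : l + 2 ≤ r := by
    by_contra! hlt
    obtain rfl : r = l + 1 := by omega
    exact siState_ne_X (l + 1) (hSIr.symm.trans (hrun.stateAt_succ_eq_X ho))
  have hlast : Odd (w.getD (r - 1) 0) := by
    have hX_before : stateAt w (r - 1) = .X := hrun.stateAt_eq_X ho (by omega) (by omega)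
    rcases stateAt_succ_of_X w (by omega) hX_before with ⟨hX, -⟩ | ⟨-, hodd⟩
    · rw [Nat.sub_add_cancel (by omega)] at hX
      exact absurd (hSIr.symm.trans hX) (siState_ne_X _)
    · exact hodd
  have hmid : ∀ j, l < j → j < r - 1 → Even (w.getD j 0) := fun j hlj hjr => by
    rcases stateAt_succ_of_X w (by omega) (hrun.stateAt_eq_X ho hlj (by omega))
      with ⟨-, he⟩ | ⟨hSI, -⟩
    · exact he
    · exact absurd hSI (hNSI (j + 1) (by omega) (by omega))
  rcases hlr2.eq_or_lt with rfl | hlt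
  · exact .inl ⟨rfl, ho, hlast⟩
  · exact .inr ⟨hlt, ho, hlast, hmid⟩

/-- in a rational tangle word, no two consecutive syllables are both SI
syllables, and every maximal run of NSI syllables other than the last one consists of
(a) a single even syllable, (b) two consecutive odd syllables, or (c) an odd syllable,
a nonempty string of even syllables, and a final odd syllable. -/
theorem nonlast_run_shapes (w : List ℤ) :
    (∀ i : ℕ, i + 1 < w.length → IsSISyl w i → ¬ IsSISyl w (i + 1)) ∧
    (∀ l r : ℕ, IsNSIRun w l r →
      (∃ j, r ≤ j ∧ j < w.length ∧ ¬ IsSISyl w j) →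
      RunA w l r ∨ RunB w l r ∨ RunC w l r) := by
  refine ⟨fun i hi => not_isSISyl_succ_of_isSISyl w (by omega), ?_⟩
  rintro l r hrun ⟨j, hrj, hj, -⟩
  rcases Int.even_or_odd (w.getD l 0) with he | ho
  · exact .inl ⟨hrun.eq_succ_of_even he, he⟩
  · exact .inr (hrun.runB_or_runC (by omega) ho)
end

section
/- Let k ≥ 3, let n_1 and n_k be odd natural numbers, and let n_i be even for all 1 < i < k. In the resolution game on (n_1, …, n_k), the second player can force the resulting word to satisfy s_1 = s_k ∈ {1, −1} and s_i = 0 for all 1 < i < k. -/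
section SignGame

variable {C : Type*} [Fintype C]

/-- A play of the sign-assignment game is a list of moves, each assigning a sign to a
crossing; it is legal if no crossing is chosen twice and every sign is `+1` or `-1`. -/
def LegalPlay (p : List (C × ℤ)) : Prop :=
  (p.map Prod.fst).Nodup ∧ ∀ m ∈ p, m.2 = 1 ∨ m.2 = -1

/-- The play `p` follows the strategy `σ` of the player who moves at all positions whose
number of prior moves is congruent to `parity` mod 2 (`parity = 0`: first player;
`parity = 1`: second player). -/
def Follows (parity : ℕ) (σ : List (C × ℤ) → C × ℤ) (p : List (C × ℤ)) : Prop :=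
  ∀ (i : ℕ) (hi : i < p.length), i % 2 = parity → p.get ⟨i, hi⟩ = σ (p.take i)

/-- The strategy `σ` always produces a legal move (an unchosen crossing with sign `±1`)
at the positions where its player is to move. -/
def LegalStrat (parity : ℕ) (σ : List (C × ℤ) → C × ℤ) : Prop :=
  ∀ p : List (C × ℤ), LegalPlay p → p.length % 2 = parity → p.length < Fintype.card C →
    (σ p).1 ∉ p.map Prod.fst ∧ ((σ p).2 = 1 ∨ (σ p).2 = -1)

/-- The player moving at positions of parity `parity` can force the predicate `P` on
complete plays: they have a legal strategy such that every complete legal play following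
it satisfies `P`. -/
def CanForce (parity : ℕ) (P : List (C × ℤ) → Prop) : Prop :=
  ∃ σ : List (C × ℤ) → C × ℤ, LegalStrat parity σ ∧
    ∀ p : List (C × ℤ), LegalPlay p → p.length = Fintype.card C → Follows parity σ p → P p

end SignGame

/-- The crossings of the resolution game on syllable sizes `n = (n_1, …, n_k)`:
pairs `(i, j)` with `i` a syllable index and `j < n_i`. -/
abbrev Cr (n : List ℕ) : Type := Σ i : Fin n.length, Fin (n.get i)

/-- The resulting word `(s_1, …, s_k)` of a complete play of the resolution game:
`s_i` is the sum of the signs assigned to the crossings of the `i`-th syllable. -/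
def result (n : List ℕ) (p : List (Cr n × ℤ)) : List ℤ :=
  (List.finRange n.length).map fun i =>
    ((p.filter fun m => decide (m.1.1 = i)).map Prod.snd).sum

/-!
The second player pairs the crossings and answers every move at the partner crossing. Inside
each syllable crossing `j` is paired with `j ^^^ 1`; since only the first and the last syllable
have odd size, this leaves exactly their last crossings `a` and `b`, which are paired with each
other. A move inside a syllable is answered with the opposite sign, so every such pair contributes
nothing, while the pair `{a, b}` gets one sign twice and adds it to both `s_1` and `s_k`.
The answer is always legal because, before each move of the first player, the chosen crossings
form a union of pairs.
-/

open Function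

theorem List.Nodup.getElem_notMem_take {α : Type*} {l : List α} (hl : l.Nodup) {i : ℕ}
    (hi : i < l.length) : l[i] ∉ l.take i := by
  rw [List.mem_take_iff_getElem]
  rintro ⟨j, hj, hji⟩
  have := hl.getElem_inj_iff.1 hji
  omega

section PairingStrategy

variable {C : Type*}

theorem CanForce.mono [Fintype C] {parity : ℕ} {P Q : List (C × ℤ) → Prop}
    (h : CanForce parity P)
    (hPQ : ∀ p, LegalPlay p → p.length = Fintype.card C → P p → Q p) : CanForce parity Q :=
  let ⟨σ, hσ, hP⟩ := h
  ⟨σ, hσ, fun p hp hlen hfol => hPQ p hp hlen (hP p hp hlen hfol)⟩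

theorem List.exists_notMem_of_length_lt_card [Fintype C] {l : List C}
    (h : l.length < Fintype.card C) : ∃ c, c ∉ l := by
  classical
  by_contra! hall
  have : Fintype.card C ≤ l.length :=
    (Finset.card_le_card fun c _ => List.mem_toFinset.2 (hall c)).trans l.toFinset_card_le
  omega

theorem List.Nodup.mem_of_length_eq_card [Fintype C] {l : List C} (hl : l.Nodup)
    (hlen : l.length = Fintype.card C) (c : C) : c ∈ l := by
  classical
  have : l.toFinset = Finset.univ :=
    Finset.eq_univ_of_card _ (by rw [List.toFinset_card_of_nodup hl, hlen])
  exact List.mem_toFinset.1 (this ▸ Finset.mem_univ c)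

variable [Nonempty C]

noncomputable def freeMove (p : List (C × ℤ)) : C × ℤ :=
  (Classical.epsilon (· ∉ p.map Prod.fst), 1)

open Classical in
-- `freeMove` is never needed along plays that follow the strategy; it only makes it total.
noncomputable def pairingStrategy (R : C × ℤ → C × ℤ) (p : List (C × ℤ)) : C × ℤ :=
  match p.getLast? with
  | some m => if (R m).1 ∈ p.map Prod.fst then freeMove p else R m
  | none => freeMove p

variable {R : C × ℤ → C × ℤ}

theorem pairingStrategy_concat {q : List (C × ℤ)} {m : C × ℤ}
    (h : (R m).1 ∉ (q ++ [m]).map Prod.fst) : pairingStrategy R (q ++ [m]) = R m := by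
  simp only [pairingStrategy, List.getLast?_concat, if_neg h]

variable [Fintype C]

theorem freeMove_legal {p : List (C × ℤ)} (h : p.length < Fintype.card C) :
    (freeMove p).1 ∉ p.map Prod.fst ∧ ((freeMove p).2 = 1 ∨ (freeMove p).2 = -1) :=
  ⟨Classical.epsilon_spec (List.exists_notMem_of_length_lt_card (by simpa using h)), Or.inl rfl⟩

theorem legalStrat_pairingStrategy (hR : ∀ m, (R m).2 = m.2 ∨ (R m).2 = -m.2) (parity : ℕ) :
    LegalStrat parity (pairingStrategy R) := by
  intro p hp _ hlt
  unfold pairingStrategy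
  split
  · next m hm =>
    split_ifs with htaken
    · exact freeMove_legal hlt
    · refine ⟨htaken, ?_⟩
      rcases hp.2 m (List.mem_of_getLast? hm) with h | h <;> rcases hR m with h' | h' <;>
        simp [h, h']
  · exact freeMove_legal hlt

variable {f : C → C} {p : List (C × ℤ)}

theorem pairingStrategy_reply (hfix : ∀ c, f c ≠ c) (hR : Involutive R)
    (hRfst : ∀ m, (R m).1 = f m.1) (hp : LegalPlay p) (hlen : p.length = Fintype.card C)
    (hfol : Follows 1 (pairingStrategy R) p) {j : ℕ} (hj : 2 * j < p.length)
    (hclosed : ∀ m ∈ p.take (2 * j), R m ∈ p.take (2 * j)) :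
    ∃ h : 2 * j + 1 < p.length, p[2 * j + 1] = R p[2 * j] := by
  set m := p[2 * j]
  have htake : p.take (2 * j + 1) = p.take (2 * j) ++ [m] := List.take_succ_eq_append_getElem hj
  have hm : m.1 ∉ (p.take (2 * j)).map Prod.fst := by
    have := hp.1.getElem_notMem_take (i := 2 * j) (by simpa using hj)
    rwa [List.getElem_map, ← List.map_take] at this
  -- A crossing taken in a position closed under `R` has its partner taken too.
  have hfree : (R m).1 ∉ (p.take (2 * j + 1)).map Prod.fst := by
    rw [htake]
    simp only [List.map_append, List.mem_append, List.mem_map, List.map_cons, List.map_nil,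
      List.mem_singleton, not_or, not_exists, not_and]
    refine ⟨fun m' hm' hm'R => hm (List.mem_map.2 ⟨R m', hclosed m' hm', ?_⟩), fun h => ?_⟩
    · rw [hRfst, hm'R, ← hRfst, hR]
    · exact hfix m.1 (by rw [← hRfst, h])
  have hlt : 2 * j + 1 < p.length := by
    by_contra! hle
    rw [List.take_of_length_le hle] at hfree
    exact hfree (hp.1.mem_of_length_eq_card (by rwa [List.length_map]) _)
  refine ⟨hlt, ?_⟩
  have hmove := hfol (2 * j + 1) hlt (by omega)
  rw [List.get_eq_getElem] at hmove
  rw [hmove, htake, pairingStrategy_concat (htake ▸ hfree)]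

theorem pairingStrategy_forall_mem_take (hfix : ∀ c, f c ≠ c) (hR : Involutive R)
    (hRfst : ∀ m, (R m).1 = f m.1) (hp : LegalPlay p) (hlen : p.length = Fintype.card C)
    (hfol : Follows 1 (pairingStrategy R) p) (j : ℕ) :
    ∀ m ∈ p.take (2 * j), R m ∈ p.take (2 * j) := by
  induction j with
  | zero => simp
  | succ j ih =>
    rcases le_or_gt p.length (2 * j) with hj | hj
    · rwa [List.take_of_length_le (by omega), ← List.take_of_length_le hj]
    obtain ⟨hj1, hreply⟩ := pairingStrategy_reply hfix hR hRfst hp hlen hfol hj ih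
    have htake : p.take (2 * (j + 1)) = p.take (2 * j) ++ [p[2 * j], R p[2 * j]] := by
      rw [show 2 * (j + 1) = 2 * j + 1 + 1 by ring, List.take_succ_eq_append_getElem hj1,
        List.take_succ_eq_append_getElem hj, hreply, List.append_assoc, List.singleton_append]
    rw [htake]
    intro m hm
    simp only [List.mem_append, List.mem_cons, List.not_mem_nil, or_false] at hm ⊢
    rcases hm with hm | rfl | rfl
    · exact Or.inl (ih m hm)
    · exact Or.inr (Or.inr rfl)
    · exact Or.inr (Or.inl (hR _))

theorem canForce_forall_mem_of_pairing (hfix : ∀ c, f c ≠ c) (hR : Involutive R)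
    (hRfst : ∀ m, (R m).1 = f m.1) (hRsnd : ∀ m, (R m).2 = m.2 ∨ (R m).2 = -m.2) :
    CanForce 1 (fun p => ∀ m ∈ p, R m ∈ p) :=
  ⟨pairingStrategy R, legalStrat_pairingStrategy hRsnd 1, fun p hp hlen hfol => by
    simpa [List.take_of_length_le (by omega : p.length ≤ 2 * p.length)] using
      pairingStrategy_forall_mem_take hfix hR hRfst hp hlen hfol p.length⟩

end PairingStrategy

section SyllableSums

variable {C ι : Type*} [DecidableEq ι] {κ : C → ι} {f : C → C}

variable (κ f) in
def respond (m : C × ℤ) : C × ℤ :=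
  (f m.1, if κ (f m.1) = κ m.1 then -m.2 else m.2)

theorem respond_involutive (hf : Involutive f) : Involutive (respond κ f) := by
  rintro ⟨c, s⟩
  by_cases h : κ (f c) = κ c
  · simp [respond, hf c, h]
  · simp [respond, hf c, h, Ne.symm h]

theorem respond_snd (m : C × ℤ) : (respond κ f m).2 = m.2 ∨ (respond κ f m).2 = -m.2 := by
  unfold respond; split_ifs <;> simp

theorem sum_filter_of_forall_respond_mem [DecidableEq C] {a b : C} (hf : Involutive f)
    (hab : f a = b) (hκab : κ a ≠ κ b) (hκ : ∀ c, c ≠ a → c ≠ b → κ (f c) = κ c)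
    {p : List (C × ℤ)} (hp : (p.map Prod.fst).Nodup) (hclosed : ∀ m ∈ p, respond κ f m ∈ p)
    {s : ℤ} (has : (a, s) ∈ p) (i : ι) :
    ((p.filter fun m => κ m.1 = i).map Prod.snd).sum =
      (if κ a = i then s else 0) + (if κ b = i then s else 0) := by
  have hpn : p.Nodup := hp.of_map _
  have hba : f b = a := by rw [← hab, hf]
  have hne : a ≠ b := fun h => hκab (congrArg κ h)
  have hbs : (b, s) ∈ p := by simpa [respond, hab, Ne.symm hκab] using hclosed _ has
  set w : C × ℤ → ℤ := fun m => if κ m.1 = i then m.2 else 0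
  set ends : C × ℤ → Prop := fun m => m.1 = a ∨ m.1 = b
  have hends : p.toFinset.filter ends = {(a, s), (b, s)} := by
    ext m
    simp only [Finset.mem_filter, List.mem_toFinset, Finset.mem_insert, Finset.mem_singleton, ends]
    constructor
    · rintro ⟨hm, rfl | rfl⟩
      · exact Or.inl (List.inj_on_of_nodup_map hp hm has rfl)
      · exact Or.inr (List.inj_on_of_nodup_map hp hm hbs rfl)
    · rintro (rfl | rfl)
      exacts [⟨has, Or.inl rfl⟩, ⟨hbs, Or.inr rfl⟩]
  -- Off the ends, `respond` pairs moves in the same syllable with opposite signs.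
  have hrest : ∑ m ∈ p.toFinset.filter (¬ ends ·), w m = 0 := by
    refine Finset.sum_involution (fun m _ => respond κ f m) ?_ ?_ ?_ ?_ <;>
      simp only [Finset.mem_filter, List.mem_toFinset, ends, not_or] <;>
      rintro ⟨c, t⟩ ⟨hm, hca, hcb⟩
    · simp only [w, respond, hκ c hca hcb, if_true]
      split_ifs <;> simp
    · intro hw heq
      have : -t = t := by simpa [respond, hκ c hca hcb] using congrArg Prod.snd heq
      simp [w, show t = 0 by omega] at hw
    · refine ⟨hclosed _ hm, fun h => hcb ?_, fun h => hca ?_⟩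
      · show c = b
        rw [← hf c, show f c = a from h, hab]
      · show c = a
        rw [← hf c, show f c = b from h, hba]
    · exact respond_involutive hf _
  calc ((p.filter fun m => κ m.1 = i).map Prod.snd).sum
      = ∑ m ∈ p.toFinset, w m := by
        rw [← List.sum_toFinset _ (hpn.filter _), List.toFinset_filter, Finset.sum_filter]
        simp [w]
    _ = ∑ m ∈ p.toFinset.filter ends, w m + ∑ m ∈ p.toFinset.filter (¬ ends ·), w m :=
        (Finset.sum_filter_add_sum_filter_not _ _ _).symm
    _ = _ := by
        rw [hends, hrest, Finset.sum_pair (by simpa using hne)]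
        simp [w]

end SyllableSums

theorem Nat.xor_one_ne_self (j : ℕ) : j ^^^ 1 ≠ j := by
  intro h
  have := congrArg (· % 2) h
  simp only [Nat.xor_mod_two_eq] at this
  omega

theorem Nat.xor_one_lt_iff {j N : ℕ} (hj : j < N) : j ^^^ 1 < N ↔ ¬(Odd N ∧ j = N - 1) := by
  rcases Nat.even_or_odd j with h | h
  · rw [Nat.even_iff] at h
    rw [Nat.xor_one_of_even (Nat.even_iff.2 h), Nat.odd_iff]
    omega
  · rw [Nat.odd_iff] at h
    rw [Nat.xor_one_of_odd (Nat.odd_iff.2 h), Nat.odd_iff]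
    omega

section EndPairing

variable {ι : Type*} {N : ι → ℕ}

theorem Sigma.fin_ext_iff {c d : Σ i, Fin (N i)} : c = d ↔ c.1 = d.1 ∧ (c.2 : ℕ) = d.2 :=
  Sigma.ext_iff.trans (and_congr_right fun h => Fin.heq_ext_iff (congrArg N h))

def lastCrossing (i : ι) (h : 0 < N i) : Σ i, Fin (N i) :=
  ⟨i, ⟨N i - 1, Nat.sub_lt h one_pos⟩⟩

theorem xor_one_lt_iff_ne_lastCrossing {i₀ i₁ : ι} (hodd : ∀ i, Odd (N i) ↔ i = i₀ ∨ i = i₁)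
    (c : Σ i, Fin (N i)) :
    (c.2 : ℕ) ^^^ 1 < N c.1 ↔ c ≠ lastCrossing i₀ ((hodd i₀).2 (Or.inl rfl)).pos ∧
      c ≠ lastCrossing i₁ ((hodd i₁).2 (Or.inr rfl)).pos := by
  rcases c with ⟨i, j⟩
  simp only [ne_eq, Sigma.fin_ext_iff, lastCrossing, Nat.xor_one_lt_iff j.2, hodd i]
  constructor
  · intro h
    constructor <;> rintro ⟨rfl, hj⟩ <;> exact h ⟨by simp, hj⟩
  · rintro ⟨h₀, h₁⟩ ⟨rfl | rfl, hj⟩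
    exacts [h₀ ⟨rfl, hj⟩, h₁ ⟨rfl, hj⟩]

variable [DecidableEq ι]

def endPairing (a b c : Σ i, Fin (N i)) : Σ i, Fin (N i) :=
  if c = a then b else if c = b then a else
    if h : (c.2 : ℕ) ^^^ 1 < N c.1 then ⟨c.1, ⟨c.2 ^^^ 1, h⟩⟩ else c

variable {a b : Σ i, Fin (N i)}

theorem endPairing_left : endPairing a b a = b := if_pos rfl

theorem endPairing_right (hab : a ≠ b) : endPairing a b b = a := by
  simp [endPairing, Ne.symm hab]

theorem endPairing_of_ne (hsib : ∀ c : Σ i, Fin (N i), (c.2 : ℕ) ^^^ 1 < N c.1 ↔ c ≠ a ∧ c ≠ b)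
    {c : Σ i, Fin (N i)} (hca : c ≠ a) (hcb : c ≠ b) :
    endPairing a b c = ⟨c.1, ⟨c.2 ^^^ 1, (hsib c).2 ⟨hca, hcb⟩⟩⟩ := by
  simp [endPairing, hca, hcb, (hsib c).2 ⟨hca, hcb⟩]

theorem endPairing_involutive (hab : a ≠ b)
    (hsib : ∀ c : Σ i, Fin (N i), (c.2 : ℕ) ^^^ 1 < N c.1 ↔ c ≠ a ∧ c ≠ b) :
    Involutive (endPairing a b) := by
  intro c
  by_cases hca : c = a
  · rw [hca, endPairing_left, endPairing_right hab]
  by_cases hcb : c = b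
  · rw [hcb, endPairing_right hab, endPairing_left]
  obtain ⟨hsa, hsb⟩ := (hsib ⟨c.1, ⟨c.2 ^^^ 1, (hsib c).2 ⟨hca, hcb⟩⟩⟩).1 (by simp)
  rw [endPairing_of_ne hsib hca hcb, endPairing_of_ne hsib hsa hsb]
  simp

theorem endPairing_ne_self (hab : a ≠ b)
    (hsib : ∀ c : Σ i, Fin (N i), (c.2 : ℕ) ^^^ 1 < N c.1 ↔ c ≠ a ∧ c ≠ b)
    (c : Σ i, Fin (N i)) : endPairing a b c ≠ c := by
  by_cases hca : c = a
  · rw [hca, endPairing_left]; exact Ne.symm hab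
  by_cases hcb : c = b
  · rw [hcb, endPairing_right hab]; exact hab
  rw [endPairing_of_ne hsib hca hcb, ne_eq, Sigma.fin_ext_iff]
  exact fun h => Nat.xor_one_ne_self _ h.2

theorem endPairing_fst (hsib : ∀ c : Σ i, Fin (N i), (c.2 : ℕ) ^^^ 1 < N c.1 ↔ c ≠ a ∧ c ≠ b)
    {c : Σ i, Fin (N i)} (hca : c ≠ a) (hcb : c ≠ b) : (endPairing a b c).1 = c.1 := by
  rw [endPairing_of_ne hsib hca hcb]

end EndPairing

theorem List.odd_get_iff_of_odd_ends {n : List ℕ} (hn : 0 < n.length) (h1 : Odd (n.getD 0 0))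
    (hlast : Odd (n.getD (n.length - 1) 0))
    (hmid : ∀ i : ℕ, 0 < i → i < n.length - 1 → Even (n.getD i 0)) (i : Fin n.length) :
    Odd (n.get i) ↔ i = ⟨0, hn⟩ ∨ i = ⟨n.length - 1, Nat.sub_lt hn one_pos⟩ := by
  rw [List.get_eq_getElem, ← List.getD_eq_getElem _ 0]
  constructor
  · intro h
    by_contra! hne
    simp only [ne_eq, Fin.ext_iff] at hne
    exact Nat.not_odd_iff_even.2 (hmid i (by omega) (by omega)) h
  · rintro (rfl | rfl) <;> assumption

theorem result_getD {n : List ℕ} (p : List (Cr n × ℤ)) {i : ℕ} (hi : i < n.length) :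
    (result n p).getD i 0 = ((p.filter fun m => m.1.1 = ⟨i, hi⟩).map Prod.snd).sum := by
  simp [result, hi]

/-- in the resolution game on `(n_1, …, n_k)` with `k ≥ 3`, `n_1` and
`n_k` odd, and all intermediate `n_i` even, the second player can force
`s_1 = s_k ∈ {1, -1}` and `s_i = 0` for all `1 < i < k`. -/
theorem second_forces_equal_ends (n : List ℕ) (hk : 3 ≤ n.length)
    (h1 : Odd (n.getD 0 0)) (hlast : Odd (n.getD (n.length - 1) 0))
    (hmid : ∀ i : ℕ, 0 < i → i < n.length - 1 → Even (n.getD i 0)) :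
    CanForce (C := Cr n) 1 (fun p =>
      ((result n p).getD 0 0 = 1 ∨ (result n p).getD 0 0 = -1) ∧
      (result n p).getD (n.length - 1) 0 = (result n p).getD 0 0 ∧
      ∀ i : ℕ, 0 < i → i < n.length - 1 → (result n p).getD i 0 = 0) := by
  classical
  have hodd := List.odd_get_iff_of_odd_ends (by omega) h1 hlast hmid
  set a : Cr n := lastCrossing _ ((hodd _).2 (Or.inl rfl)).pos
  set b : Cr n := lastCrossing _ ((hodd _).2 (Or.inr rfl)).pos
  have : Nonempty (Cr n) := ⟨a⟩
  have hab : a.1 ≠ b.1 := by simp [a, b, lastCrossing, Fin.ext_iff]; omega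
  have hsib := xor_one_lt_iff_ne_lastCrossing hodd
  have hf := endPairing_involutive (ne_of_apply_ne _ hab) hsib
  refine (canForce_forall_mem_of_pairing (endPairing_ne_self (ne_of_apply_ne _ hab) hsib)
    (respond_involutive (κ := Sigma.fst) hf) (fun _ => rfl) respond_snd).mono
    fun p hp hlen hclosed => ?_
  obtain ⟨⟨c, s⟩, has, rfl⟩ := List.mem_map.1 (hp.1.mem_of_length_eq_card (by simpa using hlen) a)
  have hentry : ∀ i (hi : i < n.length), (result n p).getD i 0 =
      (if i = 0 then s else 0) + (if i = n.length - 1 then s else 0) := by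
    intro i hi
    rw [result_getD p hi, sum_filter_of_forall_respond_mem hf endPairing_left hab
      (fun c hca hcb => endPairing_fst hsib hca hcb) hp.1 hclosed has]
    simp [a, b, lastCrossing, Fin.ext_iff, eq_comm]
  have hs₁ : (result n p).getD 0 0 = s := by
    rw [hentry 0 (by omega), if_pos rfl, if_neg (by omega), add_zero]
  have hsₖ : (result n p).getD (n.length - 1) 0 = s := by
    rw [hentry _ (by omega), if_neg (by omega), if_pos rfl, zero_add]
  refine ⟨hs₁ ▸ hp.2 _ has, hsₖ.trans hs₁.symm, fun i hi0 hi1 => ?_⟩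
  rw [hentry i (by omega), if_neg (by omega), if_neg (by omega), add_zero]
end
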